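/- arXiv:1801.05251 — 6 statements merged into one kernel-verified Lean document; each statement's English description precedes it below -/
import Mathlib

section
/- Let {x^k} be generated by the conditional gradient method with Armijo rule: x⁰ ∈ D; for each k, y^k ∈ Z(x^k), d^k = y^k − x^k with ⟨f'(x^k), d^k⟩ < 0, λ_k = θ^{m_k} where m_k is the smallest m ∈ ℤ₊ with f(x^k + θ^m d^k) ≤ f(x^k) + β θ^m ⟨f'(x^k), d^k⟩, and x^{k+1} = x^k + λ_k d^k, where β, θ ∈ (0,1). If f is pseudo-convex on D, then every limit point of {x^k} belongs to D* and lim_{k→∞} f(x^k) = f*. -/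
/-! With `d_k = y k - x k`, the Armijo rule makes `f (x k)` decrease by at least
`β λ_k |⟪f' (x k), d_k⟫|`; being bounded below on the compact set `D`, the values converge and
`λ_k ⟪f' (x k), d_k⟫ → 0`. Along a subsequence with `x k → x'`, `y k → y'`, `λ_k → l` this
gives `l g = 0` for `g = ⟪f' x', y' - x'⟫ ≤ 0`. If `l = 0`, the rejected trial steps `λ_k / θ`
and the mean value theorem give points `ξ_k → x'` with `β ⟪f' (x k), d_k⟫ < ⟪f' ξ_k, d_k⟫`,
hence `β g ≤ g` and again `g = 0` as `β < 1`. Since `y k` minimises the linearisation, `g = 0`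
says `⟪f' x', u - x'⟫ ≥ 0` on `D`, so `x'` is a minimiser by pseudo-convexity, and the monotone
limit of `f (x k)` is `f x' = f*`. -/

open Filter Set Topology RealInnerProductSpace

theorem ContinuousWithinAt.tendsto_comp_of_eventually_mem {α X Y : Type*} [TopologicalSpace X]
    [TopologicalSpace Y] {g : X → Y} {s : Set X} {a : X} {u : α → X} {l : Filter α}
    (hg : ContinuousWithinAt g s a) (hu : Tendsto u l (𝓝 a)) (hmem : ∀ᶠ k in l, u k ∈ s) :
    Tendsto (g ∘ u) l (𝓝 (g a)) :=
  hg.tendsto.comp (tendsto_nhdsWithin_iff.2 ⟨hu, hmem⟩)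

theorem tendsto_zero_of_le_add_mul {u a : ℕ → ℝ} {β L : ℝ} (hβ : 0 < β) (ha : ∀ k, a k ≤ 0)
    (hu : ∀ k, u (k + 1) ≤ u k + β * a k) (hL : Tendsto u atTop (𝓝 L)) :
    Tendsto a atTop (𝓝 0) := by
  have hdiff : Tendsto (fun k => (u (k + 1) - u k) / β) atTop (𝓝 0) := by
    simpa using ((hL.comp (tendsto_add_atTop_nat 1)).sub hL).div_const β
  refine tendsto_of_tendsto_of_tendsto_of_le_of_le hdiff tendsto_const_nhds (fun k => ?_) ha
  rw [div_le_iff₀ hβ]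
  linarith [hu k]

theorem tendsto_sInf_image_of_forall_subseq_le {X : Type*} [PseudoMetricSpace X]
    {D : Set X} (hD : IsCompact D) {f : X → ℝ} (hf : ContinuousOn f D) {x : ℕ → X}
    (hxD : ∀ k, x k ∈ D) {L : ℝ} (hL : Tendsto (f ∘ x) atTop (𝓝 L))
    (hmin : ∀ (x' : X) (φ : ℕ → ℕ), StrictMono φ → Tendsto (x ∘ φ) atTop (𝓝 x') →
      ∀ u ∈ D, f x' ≤ f u) :
    Tendsto (f ∘ x) atTop (𝓝 (sInf (f '' D))) := by
  obtain ⟨x', hx'D, φ, hφ, hx⟩ := hD.tendsto_subseq hxD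
  have hLx' : L = f x' := tendsto_nhds_unique (hL.comp hφ.tendsto_atTop)
    ((hf x' hx'D).tendsto_comp_of_eventually_mem hx (Eventually.of_forall fun k => hxD _))
  have hsInf : sInf (f '' D) = f x' := by
    refine IsLeast.csInf_eq ⟨mem_image_of_mem f hx'D, ?_⟩
    rintro _ ⟨u, hu, rfl⟩
    exact hmin x' φ hφ hx u hu
  rwa [hsInf, ← hLx']

theorem Convex.iterates_mem {E : Type*} [AddCommGroup E] [Module ℝ E] {D : Set E}
    (hD : Convex ℝ D) {x y : ℕ → E} {lam : ℕ → ℝ} (hx0 : x 0 ∈ D) (hy : ∀ k, y k ∈ D)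
    (hlam : ∀ k, lam k ∈ Icc 0 1) (hstep : ∀ k, x (k + 1) = x k + lam k • (y k - x k)) :
    ∀ k, x k ∈ D
  | 0 => hx0
  | k + 1 => hstep k ▸ hD.add_smul_sub_mem (hD.iterates_mem hx0 hy hlam hstep k) (hy k) (hlam k)

section Gradient

variable {E : Type*} [NormedAddCommGroup E] [InnerProductSpace ℝ E]
  {D : Set E} {f : E → ℝ} {f' : E → E}

theorem ContinuousOn.tendsto_inner_apply_sub (hf' : ContinuousOn f' D) {x' y' : E} (hx' : x' ∈ D)
    {xs ys : ℕ → E} (hxsD : ∀ k, xs k ∈ D) (hxs : Tendsto xs atTop (𝓝 x'))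
    (hys : Tendsto ys atTop (𝓝 y')) :
    Tendsto (fun k => ⟪f' (xs k), ys k - xs k⟫) atTop (𝓝 ⟪f' x', y' - x'⟫) :=
  ((hf' x' hx').tendsto_comp_of_eventually_mem hxs (Eventually.of_forall hxsD)).inner
    (hys.sub hxs)

theorem mul_inner_le_inner_of_tendsto {β : ℝ} (hf' : ContinuousOn f' D) {x' y' : E}
    (hx' : x' ∈ D) {xs ys : ℕ → E} {c : ℕ → ℝ} (hxs : Tendsto xs atTop (𝓝 x'))
    (hys : Tendsto ys atTop (𝓝 y')) (hc : Tendsto c atTop (𝓝 0)) (hxsD : ∀ k, xs k ∈ D)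
    (hmem : ∀ᶠ k in atTop, xs k + c k • (ys k - xs k) ∈ D)
    (hle : ∀ᶠ k in atTop,
      β * ⟪f' (xs k), ys k - xs k⟫ ≤ ⟪f' (xs k + c k • (ys k - xs k)), ys k - xs k⟫) :
    β * ⟪f' x', y' - x'⟫ ≤ ⟪f' x', y' - x'⟫ := by
  have hξ : Tendsto (fun k => xs k + c k • (ys k - xs k)) atTop (𝓝 x') := by
    simpa using hxs.add (hc.smul (hys.sub hxs))
  have hrhs := ((hf' x' hx').tendsto_comp_of_eventually_mem hξ hmem).inner (𝕜 := ℝ) (hys.sub hxs)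
  exact le_of_tendsto_of_tendsto
    ((hf'.tendsto_inner_apply_sub hx' hxsD hxs hys).const_mul β) hrhs hle

variable [CompleteSpace E]

theorem HasGradientAt.hasDerivAt_add_smul {g p d : E} {t : ℝ}
    (h : HasGradientAt f g (p + t • d)) :
    HasDerivAt (fun s : ℝ => f (p + s • d)) ⟪g, d⟫ t := by
  have hline : HasDerivAt (fun s : ℝ => p + s • d) d t := by
    simpa using ((hasDerivAt_id t).smul_const d).const_add p
  exact h.hasFDerivAt.comp_hasDerivAt t hline

theorem exists_lt_inner_of_lt_add_smul {p d : E} {s a : ℝ} (hs : 0 < s)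
    (hf : ∀ t ∈ Icc 0 s, HasGradientAt f (f' (p + t • d)) (p + t • d))
    (hlt : f p + s * a < f (p + s • d)) :
    ∃ c ∈ Ioo 0 s, a < ⟪f' (p + c • d), d⟫ := by
  have hcont : ContinuousOn (fun t : ℝ => f (p + t • d)) (Icc 0 s) := fun t ht =>
    (hf t ht).hasDerivAt_add_smul.continuousAt.continuousWithinAt
  obtain ⟨c, hc, hslope⟩ := exists_hasDerivAt_eq_slope _ _ hs hcont
    fun t ht => (hf t (Ioo_subset_Icc_self ht)).hasDerivAt_add_smul
  refine ⟨c, hc, ?_⟩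
  rw [hslope, zero_smul, add_zero, sub_zero, lt_div_iff₀ hs]
  linarith

theorem exists_lt_inner_of_not_armijo (hD : Convex ℝ D) (hf : ∀ z ∈ D, HasGradientAt f (f' z) z)
    {β s : ℝ} (hs : s ∈ Ioc 0 1) {p q : E} (hp : p ∈ D) (hq : q ∈ D)
    (hfail : ¬ f (p + s • (q - p)) ≤ f p + β * s * ⟪f' p, q - p⟫) :
    ∃ c ∈ Ioo 0 s, β * ⟪f' p, q - p⟫ < ⟪f' (p + c • (q - p)), q - p⟫ := by
  refine exists_lt_inner_of_lt_add_smul hs.1 (fun t ht => hf _ ?_) (by linarith [not_le.1 hfail])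
  exact hD.add_smul_sub_mem hp hq ⟨ht.1, ht.2.trans hs.2⟩

section Armijo

variable {β θ : ℝ} {x y : ℕ → E} {lam : ℕ → ℝ} {m : ℕ → ℕ}

theorem armijo_mul_inner_le_of_tendsto_zero (hD : Convex ℝ D)
    (hf : ∀ z ∈ D, HasGradientAt f (f' z) z) (hf' : ContinuousOn f' D) (hθ : θ ∈ Ioo 0 1)
    (hxD : ∀ k, x k ∈ D) (hyD : ∀ k, y k ∈ D)
    (hmmin : ∀ k, ∀ j < m k, ¬ (f (x k + θ ^ j • (y k - x k)) ≤
      f (x k) + β * θ ^ j * ⟪f' (x k), y k - x k⟫))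
    (hlam : ∀ k, lam k = θ ^ m k) {σ : ℕ → ℕ} {x' y' : E} (hx' : x' ∈ D)
    (hxσ : Tendsto (x ∘ σ) atTop (𝓝 x')) (hyσ : Tendsto (y ∘ σ) atTop (𝓝 y'))
    (hlσ : Tendsto (lam ∘ σ) atTop (𝓝 0)) :
    β * ⟪f' x', y' - x'⟫ ≤ ⟪f' x', y' - x'⟫ := by
  have hpow : ∀ j, θ ^ j ∈ Ioc 0 1 := fun j => ⟨pow_pos hθ.1 j, pow_le_one₀ hθ.1.le hθ.2.le⟩
  choose! c hc using fun k (hk : 1 ≤ m k) =>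
    exists_lt_inner_of_not_armijo hD hf (hpow (m k - 1)) (hxD k) (hyD k)
      (hmmin k (m k - 1) (by omega))
  -- `m k = 0` would mean `λ_k = 1`
  have hm : ∀ᶠ k in atTop, 1 ≤ m (σ k) := by
    filter_upwards [hlσ.eventually (gt_mem_nhds one_pos)] with k hk
    by_contra! h0
    simp [hlam, Nat.lt_one_iff.1 h0] at hk
  have hprev : ∀ k, 1 ≤ m k → θ ^ (m k - 1) = lam k / θ := fun k hk => by
    rw [hlam, eq_div_iff hθ.1.ne', ← pow_succ, Nat.sub_add_cancel hk]
  have hcσ : Tendsto (c ∘ σ) atTop (𝓝 0) := by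
    refine tendsto_of_tendsto_of_tendsto_of_le_of_le' tendsto_const_nhds
      (by simpa using hlσ.div_const θ) ?_ ?_ <;> filter_upwards [hm] with k hk
    · exact (hc _ hk).1.1.le
    · exact (hprev _ hk) ▸ (hc _ hk).1.2.le
  refine mul_inner_le_inner_of_tendsto hf' hx' hxσ hyσ hcσ (fun k => hxD _) ?_ ?_ <;>
    filter_upwards [hm] with k hk
  · exact hD.add_smul_sub_mem (hxD _) (hyD _)
      ⟨(hc _ hk).1.1.le, (hc _ hk).1.2.le.trans (hpow _).2⟩
  · exact (hc _ hk).2.le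

theorem armijo_inner_eq_zero_of_tendsto (hD : Convex ℝ D)
    (hf : ∀ z ∈ D, HasGradientAt f (f' z) z) (hf' : ContinuousOn f' D) (hβ : β < 1)
    (hθ : θ ∈ Ioo 0 1) (hxD : ∀ k, x k ∈ D) (hyD : ∀ k, y k ∈ D)
    (hdesc : ∀ k, ⟪f' (x k), y k - x k⟫ < 0)
    (hmmin : ∀ k, ∀ j < m k, ¬ (f (x k + θ ^ j • (y k - x k)) ≤
      f (x k) + β * θ ^ j * ⟪f' (x k), y k - x k⟫))
    (hlam : ∀ k, lam k = θ ^ m k)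
    (hlamg : Tendsto (fun k => lam k * ⟪f' (x k), y k - x k⟫) atTop (𝓝 0))
    {σ : ℕ → ℕ} (hσ : Tendsto σ atTop atTop) {x' y' : E} {l : ℝ} (hx' : x' ∈ D)
    (hxσ : Tendsto (x ∘ σ) atTop (𝓝 x')) (hyσ : Tendsto (y ∘ σ) atTop (𝓝 y'))
    (hlσ : Tendsto (lam ∘ σ) atTop (𝓝 l)) :
    ⟪f' x', y' - x'⟫ = 0 := by
  have hg := hf'.tendsto_inner_apply_sub hx' (fun k => hxD (σ k)) hxσ hyσ
  have hg_nonpos : ⟪f' x', y' - x'⟫ ≤ 0 := le_of_tendsto' hg fun k => (hdesc _).le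
  rcases mul_eq_zero.1 (tendsto_nhds_unique (hlσ.mul hg) (hlamg.comp hσ)) with hl | hg0
  · subst hl
    nlinarith [armijo_mul_inner_le_of_tendsto_zero hD hf hf' hθ hxD hyD hmmin hlam hx' hxσ hyσ
      hlσ]
  · exact hg0

theorem armijo_limit_mem_and_inner_nonneg (hDc : IsCompact D) (hD : Convex ℝ D)
    (hf : ∀ z ∈ D, HasGradientAt f (f' z) z) (hf' : ContinuousOn f' D) (hβ : β < 1)
    (hθ : θ ∈ Ioo 0 1) (hxD : ∀ k, x k ∈ D)
    (hy : ∀ k, y k ∈ D ∧ ∀ w ∈ D, ⟪f' (x k), y k⟫ ≤ ⟪f' (x k), w⟫)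
    (hdesc : ∀ k, ⟪f' (x k), y k - x k⟫ < 0)
    (hmmin : ∀ k, ∀ j < m k, ¬ (f (x k + θ ^ j • (y k - x k)) ≤
      f (x k) + β * θ ^ j * ⟪f' (x k), y k - x k⟫))
    (hlam : ∀ k, lam k = θ ^ m k)
    (hlamg : Tendsto (fun k => lam k * ⟪f' (x k), y k - x k⟫) atTop (𝓝 0))
    {φ : ℕ → ℕ} (hφ : StrictMono φ) {x' : E} (hx : Tendsto (x ∘ φ) atTop (𝓝 x')) :
    x' ∈ D ∧ ∀ u ∈ D, 0 ≤ ⟪f' x', u - x'⟫ := by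
  have hx' : x' ∈ D := hDc.isClosed.mem_of_tendsto hx (Eventually.of_forall fun k => hxD _)
  obtain ⟨y', -, ψ, hψ, hy'⟩ := hDc.tendsto_subseq fun k => (hy (φ k)).1
  obtain ⟨l, -, χ, hχ, hl⟩ := (isCompact_Icc (a := (0 : ℝ)) (b := 1)).tendsto_subseq
    (x := fun k => lam (φ (ψ k)))
    fun k => by rw [hlam]; exact ⟨pow_nonneg hθ.1.le _, pow_le_one₀ hθ.1.le hθ.2.le⟩
  set σ := φ ∘ ψ ∘ χ
  have hσ : StrictMono σ := hφ.comp (hψ.comp hχ)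
  have hxσ : Tendsto (x ∘ σ) atTop (𝓝 x') := hx.comp (hψ.comp hχ).tendsto_atTop
  have hyσ : Tendsto (y ∘ σ) atTop (𝓝 y') := hy'.comp hχ.tendsto_atTop
  have hg0 := armijo_inner_eq_zero_of_tendsto hD hf hf' hβ hθ hxD (fun k => (hy k).1) hdesc
    hmmin hlam hlamg hσ.tendsto_atTop hx' hxσ hyσ hl
  refine ⟨hx', fun u hu => hg0 ▸ le_of_tendsto_of_tendsto'
    (hf'.tendsto_inner_apply_sub hx' (fun k => hxD (σ k)) hxσ hyσ)
    (hf'.tendsto_inner_apply_sub hx' (fun k => hxD (σ k)) hxσ tendsto_const_nhds) fun k => ?_⟩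
  rw [inner_sub_right, inner_sub_right]
  exact sub_le_sub_right ((hy (σ k)).2 u hu) _

end Armijo

end Gradient

theorem stmt_6_general {n : ℕ} (D : Set (EuclideanSpace ℝ (Fin n)))
    (hDconv : Convex ℝ D) (hDcl : IsClosed D)
    (hDbd : Bornology.IsBounded D)
    (f : EuclideanSpace ℝ (Fin n) → ℝ)
    (f' : EuclideanSpace ℝ (Fin n) → EuclideanSpace ℝ (Fin n))
    (hf : ∀ x ∈ D, HasGradientAt f (f' x) x)
    (hf' : ContinuousOn f' D)
    (hpc : ∀ x ∈ D, ∀ y ∈ D, 0 ≤ ⟪f' x, y - x⟫ → f x ≤ f y)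
    (β θ : ℝ) (hβ : β ∈ Set.Ioo (0 : ℝ) 1) (hθ : θ ∈ Set.Ioo (0 : ℝ) 1)
    (x y : ℕ → EuclideanSpace ℝ (Fin n)) (lam : ℕ → ℝ) (m : ℕ → ℕ)
    (hx0 : x 0 ∈ D)
    (hy : ∀ k, y k ∈ D ∧ ∀ w ∈ D, ⟪f' (x k), y k⟫ ≤ ⟪f' (x k), w⟫)
    (hdesc : ∀ k, ⟪f' (x k), y k - x k⟫ < 0)
    (harm : ∀ k, f (x k + θ ^ m k • (y k - x k)) ≤
      f (x k) + β * θ ^ m k * ⟪f' (x k), y k - x k⟫)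
    (hmmin : ∀ k, ∀ j < m k, ¬ (f (x k + θ ^ j • (y k - x k)) ≤
      f (x k) + β * θ ^ j * ⟪f' (x k), y k - x k⟫))
    (hlam : ∀ k, lam k = θ ^ m k)
    (hstep : ∀ k, x (k + 1) = x k + lam k • (y k - x k)) :
    (∀ (x' : EuclideanSpace ℝ (Fin n)) (φ : ℕ → ℕ), StrictMono φ →
        Tendsto (x ∘ φ) atTop (nhds x') →
        x' ∈ D ∧ ∀ u ∈ D, f x' ≤ f u) ∧
    Tendsto (fun k => f (x k)) atTop (nhds (sInf (f '' D))) := by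
  have hD : IsCompact D := Metric.isCompact_of_isClosed_isBounded hDcl hDbd
  have hlamI : ∀ k, lam k ∈ Icc 0 1 := fun k => by
    rw [hlam]; exact ⟨pow_nonneg hθ.1.le _, pow_le_one₀ hθ.1.le hθ.2.le⟩
  have hxD : ∀ k, x k ∈ D := hDconv.iterates_mem hx0 (fun k => (hy k).1) hlamI hstep
  have hdecr : ∀ k, f (x (k + 1)) ≤ f (x k) + β * (lam k * ⟪f' (x k), y k - x k⟫) := fun k => by
    rw [hstep, hlam, ← mul_assoc]; exact harm k
  have hstepneg : ∀ k, lam k * ⟪f' (x k), y k - x k⟫ ≤ 0 := fun k =>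
    mul_nonpos_of_nonneg_of_nonpos (hlamI k).1 (hdesc k).le
  have hfc : ContinuousOn f D := fun z hz => (hf z hz).continuousAt.continuousWithinAt
  have hconv : Tendsto (fun k => f (x k)) atTop (𝓝 (⨅ k, f (x k))) :=
    tendsto_atTop_ciInf (antitone_nat_of_succ_le fun k => by
      linarith [hdecr k, mul_nonpos_of_nonneg_of_nonpos hβ.1.le (hstepneg k)])
      ((hD.image_of_continuousOn hfc).isBounded.bddBelow.mono
        (range_subset_iff.2 fun k => mem_image_of_mem f (hxD k)))
  have hmin : ∀ (x' : EuclideanSpace ℝ (Fin n)) (φ : ℕ → ℕ), StrictMono φ →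
      Tendsto (x ∘ φ) atTop (𝓝 x') → x' ∈ D ∧ ∀ u ∈ D, f x' ≤ f u := fun x' φ hφ hx => by
    obtain ⟨hx', hstat⟩ := armijo_limit_mem_and_inner_nonneg hD hDconv hf hf' hβ.2 hθ hxD hy hdesc
      hmmin hlam (tendsto_zero_of_le_add_mul hβ.1 hstepneg hdecr hconv) hφ hx
    exact ⟨hx', fun u hu => hpc x' hx' u hu (hstat u hu)⟩
  exact ⟨hmin, tendsto_sInf_image_of_forall_subseq_le hD hfc hxD hconv
    fun x' φ hφ hx => (hmin x' φ hφ hx).2⟩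

/-- Let `{x^k}` be generated by the conditional gradient method with Armijo
rule (as in Statement 5).  If `f` is pseudo-convex on `D`, then every limit point of
`{x^k}` belongs to `D*` and `lim_{k→∞} f(x^k) = f*`. -/
theorem stmt_6 {n : ℕ} (D : Set (EuclideanSpace ℝ (Fin n)))
    (hDne : D.Nonempty) (hDconv : Convex ℝ D) (hDcl : IsClosed D)
    (hDbd : Bornology.IsBounded D)
    (f : EuclideanSpace ℝ (Fin n) → ℝ)
    (f' : EuclideanSpace ℝ (Fin n) → EuclideanSpace ℝ (Fin n))
    (hf : ∀ x ∈ D, HasGradientAt f (f' x) x)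
    (hf' : ContinuousOn f' D)
    (hpc : ∀ x ∈ D, ∀ y ∈ D, 0 ≤ ⟪f' x, y - x⟫ → f x ≤ f y)
    (β θ : ℝ) (hβ : β ∈ Set.Ioo (0 : ℝ) 1) (hθ : θ ∈ Set.Ioo (0 : ℝ) 1)
    (x y : ℕ → EuclideanSpace ℝ (Fin n)) (lam : ℕ → ℝ) (m : ℕ → ℕ)
    (hx0 : x 0 ∈ D)
    (hy : ∀ k, y k ∈ D ∧ ∀ w ∈ D, ⟪f' (x k), y k⟫ ≤ ⟪f' (x k), w⟫)
    (hdesc : ∀ k, ⟪f' (x k), y k - x k⟫ < 0)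
    (harm : ∀ k, f (x k + θ ^ m k • (y k - x k)) ≤
      f (x k) + β * θ ^ m k * ⟪f' (x k), y k - x k⟫)
    (hmmin : ∀ k, ∀ j < m k, ¬ (f (x k + θ ^ j • (y k - x k)) ≤
      f (x k) + β * θ ^ j * ⟪f' (x k), y k - x k⟫))
    (hlam : ∀ k, lam k = θ ^ m k)
    (hstep : ∀ k, x (k + 1) = x k + lam k • (y k - x k)) :
    (∀ (x' : EuclideanSpace ℝ (Fin n)) (φ : ℕ → ℕ), StrictMono φ →
        Tendsto (x ∘ φ) atTop (nhds x') →
        x' ∈ D ∧ ∀ u ∈ D, f x' ≤ f u) ∧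
    Tendsto (fun k => f (x k)) atTop (nhds (sInf (f '' D))) :=
  stmt_6_general D hDconv hDcl hDbd f f' hf hf' hpc β θ hβ hθ x y lam m hx0 hy hdesc harm hmmin hlam
    hstep
end

section
/- Each stage of the inexact conditional gradient method (CGMI) is finite: fix δ > 0, β, θ ∈ (0,1). There is no infinite sequence {x^k} ⊂ D with points z^k ∈ D such that for every k: ⟨f'(x^k), x^k − z^k⟩ ≥ δ, d^k = z^k − x^k, λ_k = θ^{m_k} where m_k is the smallest m ∈ ℤ₊ with f(x^k + θ^m d^k) ≤ f(x^k) + β θ^m ⟨f'(x^k), d^k⟩, and x^{k+1} = x^k + λ_k d^k. -/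
/-!
Since `f'` is uniformly continuous on the compact set `D` and the directions `z - x` are bounded,
there is a `τ > 0` such that the Armijo condition holds for every step `t ≤ τ` at every point of `D`
whose direction has gap at least `δ`. Backtracking therefore never returns a step below
`min 1 (θ τ)`, so every iteration decreases `f` by at least `β min 1 (θ τ) δ`, which is
impossible for a function bounded below on `D`.
-/

open RealInnerProductSpace Set

section Armijo

variable {E : Type*} [NormedAddCommGroup E] [InnerProductSpace ℝ E]

theorem le_add_mul_of_inner_gradient_le [CompleteSpace E] {f : E → ℝ} {f' : E → E}
    {x d : E} {t c : ℝ} (ht : 0 < t)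
    (hf : ∀ s ∈ Icc 0 t, HasGradientAt f (f' (x + s • d)) (x + s • d))
    (hslope : ∀ s ∈ Ioo 0 t, ⟪f' (x + s • d), d⟫ ≤ c) :
    f (x + t • d) ≤ f x + t * c := by
  have hderiv : ∀ s ∈ Icc 0 t,
      HasDerivAt (fun s : ℝ => f (x + s • d)) ⟪f' (x + s • d), d⟫ s := by
    intro s hs
    have hline : HasDerivAt (fun s : ℝ => x + s • d) d s := by
      simpa using ((hasDerivAt_id s).smul_const d).const_add x
    have hcomp := (hf s hs).hasFDerivAt.comp_hasDerivAt s hline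
    simp only [InnerProductSpace.toDual_apply_apply] at hcomp
    exact hcomp
  obtain ⟨s, hs, hmvt⟩ := exists_hasDerivAt_eq_slope _ _ ht
    (fun s hs => (hderiv s hs).continuousAt.continuousWithinAt)
    (fun s hs => hderiv s (Ioo_subset_Icc_self hs))
  have := hslope s hs
  rw [hmvt, zero_smul, add_zero, sub_zero, div_le_iff₀ ht] at this
  linarith

theorem inner_le_mul_inner_of_norm_sub_mul_le {g g₀ d : E} {β δ M : ℝ} (hβ : β ≤ 1)
    (hd : ‖d‖ ≤ M) (hg₀ : ⟪g₀, d⟫ ≤ -δ) (hg : ‖g - g₀‖ * M ≤ (1 - β) * δ) :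
    ⟪g, d⟫ ≤ β * ⟪g₀, d⟫ := by
  have hclose : ⟪g - g₀, d⟫ ≤ ‖g - g₀‖ * M :=
    (real_inner_le_norm _ _).trans (mul_le_mul_of_nonneg_left hd (norm_nonneg _))
  rw [inner_sub_left] at hclose
  nlinarith

theorem exists_pos_forall_armijo [CompleteSpace E] {D : Set E} (hDconv : Convex ℝ D)
    (hDbd : Bornology.IsBounded D) {f : E → ℝ} {f' : E → E}
    (hf : ∀ y ∈ D, HasGradientAt f (f' y) y) (hf' : UniformContinuousOn f' D)
    {β δ : ℝ} (hβ : β < 1) (hδ : 0 < δ) :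
    ∃ τ > 0, ∀ x ∈ D, ∀ z ∈ D, ⟪f' x, z - x⟫ ≤ -δ → ∀ t ∈ Ioc 0 τ,
      f (x + t • (z - x)) ≤ f x + β * t * ⟪f' x, z - x⟫ := by
  set M := Metric.diam D + 1
  have hM : 0 < M := by positivity
  have hβ' : 0 < 1 - β := by linarith
  obtain ⟨ε, hε, hfε⟩ :=
    Metric.uniformContinuousOn_iff.mp hf' ((1 - β) * δ / M) (by positivity)
  refine ⟨min 1 (ε / M), by positivity, fun x hx z hz hdesc t ⟨ht, htτ⟩ => ?_⟩
  have hdM : ‖z - x‖ ≤ M := by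
    rw [← dist_eq_norm]; linarith [Metric.dist_le_diam_of_mem hDbd hz hx]
  have hseg : ∀ s ∈ Icc 0 t, x + s • (z - x) ∈ D := fun s hs =>
    hDconv.add_smul_sub_mem hx hz ⟨hs.1, hs.2.trans (htτ.trans (min_le_left _ _))⟩
  have hslope : ∀ s ∈ Ioo 0 t, ⟪f' (x + s • (z - x)), z - x⟫ ≤ β * ⟪f' x, z - x⟫ := by
    intro s hs
    have hdist : dist (x + s • (z - x)) x < ε := calc
      dist (x + s • (z - x)) x = s * ‖z - x‖ := by
        rw [dist_eq_norm, add_sub_cancel_left, norm_smul, Real.norm_of_nonneg hs.1.le]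
      _ ≤ s * M := mul_le_mul_of_nonneg_left hdM hs.1.le
      _ < t * M := mul_lt_mul_of_pos_right hs.2 hM
      _ ≤ ε := (le_div_iff₀ hM).mp (htτ.trans (min_le_right _ _))
    have hclose := hfε _ (hseg s (Ioo_subset_Icc_self hs)) x hx hdist
    rw [dist_eq_norm, lt_div_iff₀ hM] at hclose
    exact inner_le_mul_inner_of_norm_sub_mul_le hβ.le hdM hdesc hclose.le
  have := le_add_mul_of_inner_gradient_le ht (fun s hs => hf _ (hseg s hs)) hslope
  linarith

end Armijo

theorem min_one_mul_le_pow_of_minimal {θ τ : ℝ} (hθ : 0 ≤ θ) {P : ℕ → Prop}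
    (hP : ∀ j, θ ^ j ≤ τ → P j) {m : ℕ} (hm : ∀ j < m, ¬ P j) :
    min 1 (θ * τ) ≤ θ ^ m := by
  cases m with
  | zero => simp
  | succ j =>
    have hτ : τ < θ ^ j := lt_of_not_ge fun h => hm j j.lt_succ_self (hP j h)
    calc min 1 (θ * τ) ≤ θ * τ := min_le_right _ _
      _ ≤ θ * θ ^ j := mul_le_mul_of_nonneg_left hτ.le hθ
      _ = θ ^ (j + 1) := (pow_succ' θ j).symm

theorem not_bddBelow_of_le_sub {u : ℕ → ℝ} {c : ℝ} (hc : 0 < c)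
    (hu : ∀ k, u (k + 1) ≤ u k - c) : ¬ BddBelow (range u) := by
  rintro ⟨b, hb⟩
  have hlin : ∀ k : ℕ, u k ≤ u 0 - k * c := by
    intro k
    induction k with
    | zero => simp
    | succ k ih => push_cast; linarith [hu k]
  obtain ⟨N, hN⟩ := exists_nat_gt ((u 0 - b) / c)
  rw [div_lt_iff₀ hc] at hN
  linarith [hlin N, hb ⟨N, rfl⟩]

theorem stmt_11_general {n : ℕ} (D : Set (EuclideanSpace ℝ (Fin n)))
    (hDconv : Convex ℝ D) (hDcl : IsClosed D)
    (hDbd : Bornology.IsBounded D)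
    (f : EuclideanSpace ℝ (Fin n) → ℝ)
    (f' : EuclideanSpace ℝ (Fin n) → EuclideanSpace ℝ (Fin n))
    (hf : ∀ x ∈ D, HasGradientAt f (f' x) x)
    (hf' : ContinuousOn f' D)
    (β θ δ : ℝ) (hβ : β ∈ Set.Ioo (0 : ℝ) 1) (hθ : θ ∈ Set.Ioo (0 : ℝ) 1) (hδ : 0 < δ)
    (x z : ℕ → EuclideanSpace ℝ (Fin n)) (lam : ℕ → ℝ) (m : ℕ → ℕ)
    (hxD : ∀ k, x k ∈ D) (hzD : ∀ k, z k ∈ D)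
    (hgap : ∀ k, δ ≤ ⟪f' (x k), x k - z k⟫)
    (harm : ∀ k, f (x k + θ ^ m k • (z k - x k)) ≤
      f (x k) + β * θ ^ m k * ⟪f' (x k), z k - x k⟫)
    (hmmin : ∀ k, ∀ j < m k, ¬ (f (x k + θ ^ j • (z k - x k)) ≤
      f (x k) + β * θ ^ j * ⟪f' (x k), z k - x k⟫))
    (hlam : ∀ k, lam k = θ ^ m k)
    (hstep : ∀ k, x (k + 1) = x k + lam k • (z k - x k)) :
    False := by
  obtain ⟨hβ0, hβ1⟩ := hβ
  have hD : IsCompact D := Metric.isCompact_of_isClosed_isBounded hDcl hDbd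
  have hdesc : ∀ k, ⟪f' (x k), z k - x k⟫ ≤ -δ := fun k => by
    rw [← neg_sub, inner_neg_right]; linarith [hgap k]
  obtain ⟨τ, hτ, harmijo⟩ := exists_pos_forall_armijo hDconv hDbd hf
    (hD.uniformContinuousOn_of_continuous hf') hβ1 hδ
  set c := min 1 (θ * τ)
  have hc : 0 < c := lt_min one_pos (mul_pos hθ.1 hτ)
  have hlam_ge : ∀ k, c ≤ lam k := fun k => hlam k ▸ min_one_mul_le_pow_of_minimal hθ.1.le
    (fun j hj => harmijo _ (hxD k) _ (hzD k) (hdesc k) _ ⟨pow_pos hθ.1 j, hj⟩) (hmmin k)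
  have hdecrease : ∀ k, f (x (k + 1)) ≤ f (x k) - β * c * δ := fun k => by
    rw [hstep k]
    have := harm k
    rw [← hlam k] at this
    nlinarith [mul_le_mul_of_nonneg_left (hdesc k) (mul_nonneg hβ0.le (hc.le.trans (hlam_ge k))),
      mul_le_mul_of_nonneg_left (hlam_ge k) (mul_nonneg hβ0.le hδ.le)]
  have hbdd : BddBelow (range (f ∘ x)) :=
    (hD.bddBelow_image fun p hp => (hf p hp).continuousAt.continuousWithinAt).mono
      (range_subset_iff.mpr fun k => mem_image_of_mem f (hxD k))
  exact not_bddBelow_of_le_sub (by positivity) hdecrease hbdd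

/-- Each stage of the inexact conditional gradient method (CGMI) is
finite: fix `δ > 0`, `β, θ ∈ (0,1)`.  There is no infinite sequence `{x^k} ⊂ D` with
points `z^k ∈ D` such that for every `k`: `⟪f'(x^k), x^k − z^k⟫ ≥ δ`, `d^k = z^k − x^k`,
`λ_k = θ^{m_k}` where `m_k` is the smallest `m ∈ ℤ₊` with
`f(x^k + θ^m d^k) ≤ f(x^k) + β θ^m ⟪f'(x^k), d^k⟫`, and `x^{k+1} = x^k + λ_k d^k`. -/
theorem stmt_11 {n : ℕ} (D : Set (EuclideanSpace ℝ (Fin n)))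
    (hDne : D.Nonempty) (hDconv : Convex ℝ D) (hDcl : IsClosed D)
    (hDbd : Bornology.IsBounded D)
    (f : EuclideanSpace ℝ (Fin n) → ℝ)
    (f' : EuclideanSpace ℝ (Fin n) → EuclideanSpace ℝ (Fin n))
    (hf : ∀ x ∈ D, HasGradientAt f (f' x) x)
    (hf' : ContinuousOn f' D)
    (β θ δ : ℝ) (hβ : β ∈ Set.Ioo (0 : ℝ) 1) (hθ : θ ∈ Set.Ioo (0 : ℝ) 1) (hδ : 0 < δ)
    (x z : ℕ → EuclideanSpace ℝ (Fin n)) (lam : ℕ → ℝ) (m : ℕ → ℕ)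
    (hxD : ∀ k, x k ∈ D) (hzD : ∀ k, z k ∈ D)
    (hgap : ∀ k, δ ≤ ⟪f' (x k), x k - z k⟫)
    (harm : ∀ k, f (x k + θ ^ m k • (z k - x k)) ≤
      f (x k) + β * θ ^ m k * ⟪f' (x k), z k - x k⟫)
    (hmmin : ∀ k, ∀ j < m k, ¬ (f (x k + θ ^ j • (z k - x k)) ≤
      f (x k) + β * θ ^ j * ⟪f' (x k), z k - x k⟫))
    (hlam : ∀ k, lam k = θ ^ m k)
    (hstep : ∀ k, x (k + 1) = x k + lam k • (z k - x k)) :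
    False :=
  stmt_11_general D hDconv hDcl hDbd f f' hf hf' β θ δ hβ hθ hδ x z lam m hxD hzD hgap harm hmmin
    hlam hstep
end

section
/- Let {w^p} and {δ_p} be such that δ_p > 0, δ_p → 0, each w^p ∈ D, f(w^{p+1}) ≤ f(w^p) for all p, and μ(w^p) < δ_p for every p (the restart condition of method (CGMI)). Then {w^p} has limit points and every limit point of {w^p} belongs to D⁰. -/
open Filter Topology RealInnerProductSpace

/-!
A limit point `w'` of the iterates lies in the closed set `D`. For every `u ∈ D` the restart
condition gives `⟪f'(wᵖ), wᵖ - u⟫ ≤ μ(wᵖ) < δ_p`; passing to the limit along a subsequence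
converging to `w'`, by continuity of `f'` on `D`, yields `⟪f'(w'), w' - u⟫ ≤ 0`. Limit points exist
because `D` is compact.
-/

section StationarityGap

variable {E : Type*} [NormedAddCommGroup E] [InnerProductSpace ℝ E]

/-- The paper's `μ(x) = max_{y ∈ D} ⟪f'(x), x - y⟫`. -/
noncomputable def stationarityGap (D : Set E) (f' : E → E) (x : E) : ℝ :=
  sSup ((fun y => ⟪f' x, x - y⟫) '' D)

lemma inner_sub_le_stationarityGap {D : Set E} (hD : IsCompact D) (f' : E → E) (x : E)
    {u : E} (hu : u ∈ D) : ⟪f' x, x - u⟫ ≤ stationarityGap D f' x :=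
  le_csSup (hD.image (by fun_prop)).bddAbove ⟨u, hu, rfl⟩

lemma inner_nonneg_of_tendsto {ι : Type*} {l : Filter ι} [l.NeBot] {g x : ι → E} {ε : ι → ℝ}
    {g₀ x₀ u : E} (hg : Tendsto g l (𝓝 g₀)) (hx : Tendsto x l (𝓝 x₀)) (hε : Tendsto ε l (𝓝 0))
    (hle : ∀ᶠ k in l, ⟪g k, x k - u⟫ ≤ ε k) : 0 ≤ ⟪g₀, u - x₀⟫ := by
  have hlim : ⟪g₀, x₀ - u⟫ ≤ 0 :=
    le_of_tendsto_of_tendsto (hg.inner (hx.sub tendsto_const_nhds)) hε hle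
  rw [← neg_sub, inner_neg_right]
  linarith

theorem stationary_of_tendsto_of_stationarityGap_le {ι : Type*} {l : Filter ι} [l.NeBot]
    {D : Set E} (hD : IsCompact D) {f' : E → E} (hf' : ContinuousOn f' D) {x : ι → E}
    {ε : ι → ℝ} {x₀ : E} (hxD : ∀ᶠ k in l, x k ∈ D) (hx : Tendsto x l (𝓝 x₀))
    (hε : Tendsto ε l (𝓝 0)) (hgap : ∀ᶠ k in l, stationarityGap D f' (x k) ≤ ε k) :
    x₀ ∈ D ∧ ∀ u ∈ D, 0 ≤ ⟪f' x₀, u - x₀⟫ := by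
  have hx₀D : x₀ ∈ D := hD.isClosed.mem_of_tendsto hx hxD
  have hg : Tendsto (f' ∘ x) l (𝓝 (f' x₀)) :=
    (hf' x₀ hx₀D).tendsto.comp (tendsto_nhdsWithin_iff.2 ⟨hx, hxD⟩)
  refine ⟨hx₀D, fun u hu => inner_nonneg_of_tendsto hg hx hε ?_⟩
  filter_upwards [hgap] with k hk
  exact (inner_sub_le_stationarityGap hD f' (x k) hu).trans hk

end StationarityGap

theorem stmt_12_general {n : ℕ} (D : Set (EuclideanSpace ℝ (Fin n)))
    (hDcl : IsClosed D)
    (hDbd : Bornology.IsBounded D)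
    (f' : EuclideanSpace ℝ (Fin n) → EuclideanSpace ℝ (Fin n))
    (hf' : ContinuousOn f' D)
    (w : ℕ → EuclideanSpace ℝ (Fin n)) (δ : ℕ → ℝ)
    (hδ0 : Tendsto δ atTop (nhds 0))
    (hwD : ∀ p, w p ∈ D)
    (hrestart : ∀ p, sSup ((fun y => ⟪f' (w p), w p - y⟫) '' D) < δ p) :
    (∃ w' : EuclideanSpace ℝ (Fin n), ∃ φ : ℕ → ℕ, StrictMono φ ∧
        Tendsto (w ∘ φ) atTop (nhds w')) ∧
    (∀ (w' : EuclideanSpace ℝ (Fin n)) (φ : ℕ → ℕ), StrictMono φ →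
        Tendsto (w ∘ φ) atTop (nhds w') →
        w' ∈ D ∧ ∀ u ∈ D, 0 ≤ ⟪f' w', u - w'⟫) := by
  have hD : IsCompact D := Metric.isCompact_of_isClosed_isBounded hDcl hDbd
  refine ⟨?_, fun w' φ hφ hlim => ?_⟩
  · obtain ⟨w', -, φ, hφ, hlim⟩ := hD.tendsto_subseq hwD
    exact ⟨w', φ, hφ, hlim⟩
  · exact stationary_of_tendsto_of_stationarityGap_le hD hf' (.of_forall fun k => hwD (φ k))
      hlim (hδ0.comp hφ.tendsto_atTop) (.of_forall fun k => (hrestart (φ k)).le)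

/-- Let `{w^p}` and `{δ_p}` be such that `δ_p > 0`, `δ_p → 0`, each
`w^p ∈ D`, `f(w^{p+1}) ≤ f(w^p)` for all `p`, and `μ(w^p) < δ_p` for every `p` (the
restart condition of method (CGMI)), where `μ(x) = max_{y ∈ D} ⟪f'(x), x − y⟫`.
Then `{w^p}` has limit points and every limit point of `{w^p}` belongs to `D⁰`. -/
theorem stmt_12 {n : ℕ} (D : Set (EuclideanSpace ℝ (Fin n)))
    (hDne : D.Nonempty) (hDconv : Convex ℝ D) (hDcl : IsClosed D)
    (hDbd : Bornology.IsBounded D)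
    (f : EuclideanSpace ℝ (Fin n) → ℝ)
    (f' : EuclideanSpace ℝ (Fin n) → EuclideanSpace ℝ (Fin n))
    (hf : ∀ x ∈ D, HasGradientAt f (f' x) x)
    (hf' : ContinuousOn f' D)
    (w : ℕ → EuclideanSpace ℝ (Fin n)) (δ : ℕ → ℝ)
    (hδpos : ∀ p, 0 < δ p) (hδ0 : Tendsto δ atTop (nhds 0))
    (hwD : ∀ p, w p ∈ D)
    (hdecr : ∀ p, f (w (p + 1)) ≤ f (w p))
    (hrestart : ∀ p, sSup ((fun y => ⟪f' (w p), w p - y⟫) '' D) < δ p) :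
    (∃ w' : EuclideanSpace ℝ (Fin n), ∃ φ : ℕ → ℕ, StrictMono φ ∧
        Tendsto (w ∘ φ) atTop (nhds w')) ∧
    (∀ (w' : EuclideanSpace ℝ (Fin n)) (φ : ℕ → ℕ), StrictMono φ →
        Tendsto (w ∘ φ) atTop (nhds w') →
        w' ∈ D ∧ ∀ u ∈ D, 0 ≤ ⟪f' w', u - w'⟫) :=
  stmt_12_general D hDcl hDbd f' hf' w δ hδ0 hwD hrestart
end

section
/- Let {w^p} and {δ_p} be such that δ_p > 0, δ_p → 0, each w^p ∈ D, f(w^{p+1}) ≤ f(w^p) for all p, and μ(w^p) < δ_p for every p (the restart condition of method (CGMI)). If f is pseudo-convex on D, then every limit point of {w^p} belongs to D* and lim_{p→∞} f(w^p) = f*. -/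
/-!
A limit point `x` of the iterates is a limit of points `w^p` at which `μ(w^p) < δ_p → 0`;
by continuity of `f'` this gives `⟪f'(x), u - x⟫ ≥ 0` for every `u ∈ D`, and pseudo-convexity
turns this stationarity into minimality. Since `D` is compact, every subsequence of
`f(w^p)` has a further subsequence converging to the value of `f` at such a limit point,
namely `f*`; hence the whole sequence converges to `f*`.
-/

open Filter Topology RealInnerProductSpace

section

variable {E : Type*} [NormedAddCommGroup E] [InnerProductSpace ℝ E]

def IsStationaryOn (f' : E → E) (D : Set E) (x : E) : Prop :=
  ∀ u ∈ D, 0 ≤ ⟪f' x, u - x⟫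

theorem IsStationaryOn.isMinOn {f : E → ℝ} {f' : E → E} {D : Set E} {x : E}
    (hpc : ∀ x ∈ D, ∀ y ∈ D, 0 ≤ ⟪f' x, y - x⟫ → f x ≤ f y)
    (hx : x ∈ D) (hstat : IsStationaryOn f' D x) : IsMinOn f D x :=
  isMinOn_iff.2 fun u hu => hpc x hx u hu (hstat u hu)

theorem inner_sub_le_sSup_image {D : Set E} (hD : IsCompact D) (v x : E) {u : E}
    (hu : u ∈ D) : ⟪v, x - u⟫ ≤ sSup ((fun y => ⟪v, x - y⟫) '' D) :=
  le_csSup (hD.image (by fun_prop)).bddAbove ⟨u, hu, rfl⟩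

theorem isStationaryOn_of_tendsto {f' : E → E} {D : Set E} (hD : IsClosed D)
    (hf' : ContinuousOn f' D) {x : ℕ → E} {x₀ : E} (hxD : ∀ k, x k ∈ D)
    (hx : Tendsto x atTop (𝓝 x₀)) {ε : ℕ → ℝ} (hε : Tendsto ε atTop (𝓝 0))
    (hgap : ∀ k, ∀ u ∈ D, ⟪f' (x k), x k - u⟫ ≤ ε k) : IsStationaryOn f' D x₀ := by
  have hx₀ : x₀ ∈ D := hD.mem_of_tendsto hx (.of_forall hxD)
  have hgrad : Tendsto (f' ∘ x) atTop (𝓝 (f' x₀)) :=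
    (hf' x₀ hx₀).tendsto.comp (tendsto_nhdsWithin_iff.2 ⟨hx, .of_forall hxD⟩)
  intro u hu
  have hlim : ⟪f' x₀, x₀ - u⟫ ≤ 0 :=
    le_of_tendsto_of_tendsto' (hgrad.inner (hx.sub tendsto_const_nhds)) hε fun k => hgap k u hu
  rw [← neg_sub, inner_neg_right]
  linarith

end

theorem IsMinOn.sInf_image_eq {α : Type*} {f : α → ℝ} {D : Set α} {x : α} (hx : x ∈ D)
    (hmin : IsMinOn f D x) : sInf (f '' D) = f x :=
  IsLeast.csInf_eq ⟨⟨x, hx, rfl⟩, Set.forall_mem_image.2 (isMinOn_iff.1 hmin)⟩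

theorem IsCompact.tendsto_sInf_image_of_isMinOn {X : Type*} [TopologicalSpace X]
    [FirstCountableTopology X] {D : Set X} (hD : IsCompact D) {f : X → ℝ}
    (hf : ContinuousOn f D) {w : ℕ → X} (hwD : ∀ p, w p ∈ D)
    (hlim : ∀ x (φ : ℕ → ℕ), Tendsto φ atTop atTop → Tendsto (w ∘ φ) atTop (𝓝 x) → IsMinOn f D x) :
    Tendsto (f ∘ w) atTop (𝓝 (sInf (f '' D))) := by
  refine tendsto_of_subseq_tendsto fun ns hns => ?_
  obtain ⟨x, hxD, ψ, hψ, hconv⟩ := hD.tendsto_subseq fun k => hwD (ns k)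
  refine ⟨ψ, ?_⟩
  rw [(hlim x (ns ∘ ψ) (hns.comp hψ.tendsto_atTop) hconv).sInf_image_eq hxD]
  exact (hf x hxD).tendsto.comp (tendsto_nhdsWithin_iff.2 ⟨hconv, .of_forall fun k => hwD _⟩)

theorem stmt_13_general {n : ℕ} (D : Set (EuclideanSpace ℝ (Fin n)))
    (hDcl : IsClosed D)
    (hDbd : Bornology.IsBounded D)
    (f : EuclideanSpace ℝ (Fin n) → ℝ)
    (f' : EuclideanSpace ℝ (Fin n) → EuclideanSpace ℝ (Fin n))
    (hf : ∀ x ∈ D, HasGradientAt f (f' x) x)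
    (hf' : ContinuousOn f' D)
    (hpc : ∀ x ∈ D, ∀ y ∈ D, 0 ≤ ⟪f' x, y - x⟫ → f x ≤ f y)
    (w : ℕ → EuclideanSpace ℝ (Fin n)) (δ : ℕ → ℝ)
    (hδ0 : Tendsto δ atTop (nhds 0))
    (hwD : ∀ p, w p ∈ D)
    (hrestart : ∀ p, sSup ((fun y => ⟪f' (w p), w p - y⟫) '' D) < δ p) :
    (∀ (w' : EuclideanSpace ℝ (Fin n)) (φ : ℕ → ℕ), StrictMono φ →
        Tendsto (w ∘ φ) atTop (nhds w') →
        w' ∈ D ∧ ∀ u ∈ D, f w' ≤ f u) ∧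
    Tendsto (fun p => f (w p)) atTop (nhds (sInf (f '' D))) := by
  have hD : IsCompact D := Metric.isCompact_of_isClosed_isBounded hDcl hDbd
  have hlim : ∀ w₀ (φ : ℕ → ℕ), Tendsto φ atTop atTop → Tendsto (w ∘ φ) atTop (𝓝 w₀) →
      w₀ ∈ D ∧ IsMinOn f D w₀ := by
    intro w₀ φ hφ hconv
    have hw₀ : w₀ ∈ D := hDcl.mem_of_tendsto hconv (.of_forall fun k => hwD (φ k))
    refine ⟨hw₀, IsStationaryOn.isMinOn hpc hw₀ ?_⟩
    refine isStationaryOn_of_tendsto hDcl hf' (fun k => hwD (φ k)) hconv (hδ0.comp hφ)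
      fun k u hu => ?_
    exact (inner_sub_le_sSup_image hD _ _ hu).trans (hrestart (φ k)).le
  refine ⟨fun w₀ φ hφ hconv => ?_, ?_⟩
  · obtain ⟨hw₀, hmin⟩ := hlim w₀ φ hφ.tendsto_atTop hconv
    exact ⟨hw₀, isMinOn_iff.1 hmin⟩
  · exact hD.tendsto_sInf_image_of_isMinOn (fun x hx => (hf x hx).continuousAt.continuousWithinAt)
      hwD fun x φ hφ hconv => (hlim x φ hφ hconv).2

/-- Let `{w^p}` and `{δ_p}` be such that `δ_p > 0`, `δ_p → 0`, each
`w^p ∈ D`, `f(w^{p+1}) ≤ f(w^p)` for all `p`, and `μ(w^p) < δ_p` for every `p` (the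
restart condition of method (CGMI)), where `μ(x) = max_{y ∈ D} ⟪f'(x), x − y⟫`.
If `f` is pseudo-convex on `D`, then every limit point of `{w^p}` belongs to `D*` and
`lim_{p→∞} f(w^p) = f*`. -/
theorem stmt_13 {n : ℕ} (D : Set (EuclideanSpace ℝ (Fin n)))
    (hDne : D.Nonempty) (hDconv : Convex ℝ D) (hDcl : IsClosed D)
    (hDbd : Bornology.IsBounded D)
    (f : EuclideanSpace ℝ (Fin n) → ℝ)
    (f' : EuclideanSpace ℝ (Fin n) → EuclideanSpace ℝ (Fin n))
    (hf : ∀ x ∈ D, HasGradientAt f (f' x) x)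
    (hf' : ContinuousOn f' D)
    (hpc : ∀ x ∈ D, ∀ y ∈ D, 0 ≤ ⟪f' x, y - x⟫ → f x ≤ f y)
    (w : ℕ → EuclideanSpace ℝ (Fin n)) (δ : ℕ → ℝ)
    (hδpos : ∀ p, 0 < δ p) (hδ0 : Tendsto δ atTop (nhds 0))
    (hwD : ∀ p, w p ∈ D)
    (hdecr : ∀ p, f (w (p + 1)) ≤ f (w p))
    (hrestart : ∀ p, sSup ((fun y => ⟪f' (w p), w p - y⟫) '' D) < δ p) :
    (∀ (w' : EuclideanSpace ℝ (Fin n)) (φ : ℕ → ℕ), StrictMono φ →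
        Tendsto (w ∘ φ) atTop (nhds w') →
        w' ∈ D ∧ ∀ u ∈ D, f w' ≤ f u) ∧
    Tendsto (fun p => f (w p)) atTop (nhds (sInf (f '' D))) :=
  stmt_13_general D hDcl hDbd f f' hf hf' hpc w δ hδ0 hwD hrestart
end

section
/- Each stage of the combined inexact adaptive-step method (CGMIS) is finite: fix δ > 0, β ∈ (0,1), a positive sequence {τ_l} → 0 with τ₀ ∈ (0,1), and λ₀ ∈ (0, τ₀]. There is no infinite sequence {x^k} ⊂ D with points z^k ∈ D such that for every k: ⟨f'(x^k), x^k − z^k⟩ ≥ δ, d^k = z^k − x^k, x^{k+1} = x^k + λ_k d^k, and there is a nondecreasing index function k ↦ l(k) with l(0) = 0 such that if f(x^{k+1}) ≤ f(x^k) + β λ_k ⟨f'(x^k), d^k⟩ then l(k+1) = l(k) and λ_{k+1} ∈ [λ_k, τ_{l(k)}], and otherwise l(k+1) = l(k) + 1 and λ_{k+1} ∈ (0, min{λ_k, τ_{l(k)+1}}]. -/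
/-!
If the Armijo test eventually always succeeds, the step sizes eventually stop decreasing, so
`f` drops by at least `β δ λ_K` per step and is unbounded below on the compact set `D`.
Otherwise the test fails infinitely often, so `l(k) → ∞` and the step sizes are squeezed to `0`
by the `τ`'s; but uniform continuity of `f'` on the compact `D` makes the Armijo test pass for
every small enough step along a direction of descent of depth `δ`, so late failures are
impossible.
-/

open Filter RealInnerProductSpace

section Descent

variable {E : Type*} [NormedAddCommGroup E] [InnerProductSpace ℝ E] [CompleteSpace E]
  {D : Set E} {f : E → ℝ} {f' : E → E}

theorem Convex.exists_pos_abs_sub_inner_le (hD : Convex ℝ D)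
    (hf : ∀ x ∈ D, HasGradientAt f (f' x) x) (hf' : UniformContinuousOn f' D)
    {ε : ℝ} (hε : 0 < ε) :
    ∃ η > 0, ∀ x ∈ D, ∀ y ∈ D, dist y x ≤ η →
      |f y - f x - ⟪f' x, y - x⟫| ≤ ε * ‖y - x‖ := by
  obtain ⟨η, hη, hf'η⟩ := Metric.uniformContinuousOn_iff_le.mp hf' ε hε
  refine ⟨η, hη, fun x hx y hy hxy => ?_⟩
  have hs : Convex ℝ (D ∩ Metric.closedBall x η) := hD.inter (convex_closedBall x η)
  have hderiv : ∀ ξ ∈ D ∩ Metric.closedBall x η,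
      HasFDerivWithinAt f (InnerProductSpace.toDual ℝ E (f' ξ)) (D ∩ Metric.closedBall x η) ξ :=
    fun ξ hξ => (hf ξ hξ.1).hasFDerivAt.hasFDerivWithinAt
  have hbound : ∀ ξ ∈ D ∩ Metric.closedBall x η,
      ‖InnerProductSpace.toDual ℝ E (f' ξ) - InnerProductSpace.toDual ℝ E (f' x)‖ ≤ ε := by
    intro ξ hξ
    rw [← map_sub, LinearIsometryEquiv.norm_map, ← dist_eq_norm]
    exact hf'η ξ hξ.1 x hx hξ.2
  exact hs.norm_image_sub_le_of_norm_hasFDerivWithin_le' hderiv hbound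
    ⟨hx, Metric.mem_closedBall_self hη.le⟩ ⟨hy, hxy⟩

theorem Convex.exists_pos_armijo (hD : Convex ℝ D) (hDbd : Bornology.IsBounded D)
    (hf : ∀ x ∈ D, HasGradientAt f (f' x) x) (hf' : UniformContinuousOn f' D)
    {β δ : ℝ} (hβ : β < 1) (hδ : 0 < δ) :
    ∃ η > 0, ∀ x ∈ D, ∀ z ∈ D, ⟪f' x, z - x⟫ ≤ -δ → ∀ t ∈ Set.Icc 0 η,
      f (x + t • (z - x)) ≤ f x + β * t * ⟪f' x, z - x⟫ := by
  set C := Metric.diam D + 1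
  have hC : 0 < C := by positivity
  have hβ' := sub_pos.2 hβ
  obtain ⟨η, hη, hTaylor⟩ :=
    hD.exists_pos_abs_sub_inner_le hf hf' (ε := (1 - β) * δ / C) (by positivity)
  refine ⟨min 1 (η / C), by positivity, fun x hx z hz hdesc t ⟨ht0, htη⟩ => ?_⟩
  have hzx : ‖z - x‖ ≤ C := by
    rw [← dist_eq_norm]; linarith [Metric.dist_le_diam_of_mem hDbd hz hx]
  have hstep : ‖t • (z - x)‖ = t * ‖z - x‖ := by
    rw [norm_smul, Real.norm_of_nonneg ht0]
  have hy : x + t • (z - x) ∈ D := by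
    simpa using hD.add_smul_sub_mem hx hz ⟨ht0, htη.trans (min_le_left _ _)⟩
  have hdist : dist (x + t • (z - x)) x ≤ η := by
    rw [dist_eq_norm, add_sub_cancel_left, hstep]
    calc t * ‖z - x‖ ≤ η / C * C := by
          gcongr; exact htη.trans (min_le_right _ _)
      _ = η := by field_simp
  have hrem := (abs_le.mp (hTaylor x hx _ hy hdist)).2
  rw [add_sub_cancel_left, inner_smul_right, hstep] at hrem
  have hrem_le : (1 - β) * δ / C * (t * ‖z - x‖) ≤ t * ((1 - β) * δ) :=
    calc (1 - β) * δ / C * (t * ‖z - x‖) = t * ((1 - β) * δ) * (‖z - x‖ / C) := by ring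
      _ ≤ t * ((1 - β) * δ) * 1 := by gcongr; exact (div_le_one hC).2 hzx
      _ = t * ((1 - β) * δ) := mul_one _
  nlinarith [mul_le_mul_of_nonneg_left hdesc (mul_nonneg hβ'.le ht0)]

end Descent

theorem not_bddBelow_range_of_eventually_le_sub_mul {u a : ℕ → ℝ} {c : ℝ} (hc : 0 < c)
    (ha : ∀ k, 0 < a k) (h : ∀ᶠ k in atTop, a k ≤ a (k + 1) ∧ u (k + 1) ≤ u k - c * a k) :
    ¬ BddBelow (Set.range u) := by
  rintro ⟨m, hm⟩
  obtain ⟨K, hK⟩ := eventually_atTop.mp h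
  have hdecay : ∀ j : ℕ, a K ≤ a (K + j) ∧ u (K + j) ≤ u K - j * (c * a K) := by
    intro j
    induction j with
    | zero => simp
    | succ j ih =>
      obtain ⟨hmono, hdesc⟩ := hK (K + j) (Nat.le_add_right K j)
      refine ⟨ih.1.trans hmono, ?_⟩
      rw [← add_assoc]
      push_cast
      nlinarith [ih.2, mul_le_mul_of_nonneg_left ih.1 hc.le]
  obtain ⟨j, hj⟩ := exists_nat_gt ((u K - m) / (c * a K))
  rw [div_lt_iff₀ (mul_pos hc (ha K))] at hj
  linarith [(hdecay j).2, hm (Set.mem_range_self (K + j))]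

theorem Monotone.tendsto_atTop_of_frequently_succ {l : ℕ → ℕ} (hl : Monotone l)
    (h : ∃ᶠ k in atTop, l (k + 1) = l k + 1) : Tendsto l atTop atTop := by
  refine tendsto_atTop_atTop_of_monotone hl fun N => ?_
  induction N with
  | zero => exact ⟨0, Nat.zero_le _⟩
  | succ N ih =>
    obtain ⟨k, hk⟩ := ih
    obtain ⟨k', hkk', hsucc⟩ := (frequently_atTop.mp h) k
    exact ⟨k' + 1, by have := hl hkk'; omega⟩

/-- `A k` says whether step `k` passes the Armijo test; `l` counts the stages. -/
def AdaptiveStepRule (A : ℕ → Prop) (τ lam : ℕ → ℝ) (l : ℕ → ℕ) : Prop :=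
  ∀ k, (A k → l (k + 1) = l k ∧ lam (k + 1) ∈ Set.Icc (lam k) (τ (l k))) ∧
    (¬ A k → l (k + 1) = l k + 1 ∧ lam (k + 1) ∈ Set.Ioc 0 (min (lam k) (τ (l k + 1))))

namespace AdaptiveStepRule

variable {A : ℕ → Prop} {τ lam : ℕ → ℝ} {l : ℕ → ℕ}

theorem pos (h : AdaptiveStepRule A τ lam l) (h0 : 0 < lam 0) (k : ℕ) : 0 < lam k := by
  induction k with
  | zero => exact h0
  | succ k ih =>
    by_cases hk : A k
    · exact ih.trans_le ((h k).1 hk).2.1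
    · exact ((h k).2 hk).2.1

theorem tendsto_zero (h : AdaptiveStepRule A τ lam l) (h0 : 0 < lam 0) (hl : Monotone l)
    (hτ : Tendsto τ atTop (nhds 0)) (hA : ∃ᶠ k in atTop, ¬ A k) :
    Tendsto lam atTop (nhds 0) := by
  have hl_top : Tendsto l atTop atTop :=
    hl.tendsto_atTop_of_frequently_succ (hA.mono fun k hk => ((h k).2 hk).1)
  have hsucc_le : ∀ k, lam (k + 1) ≤ max (τ (l k)) (τ (l k + 1)) := by
    intro k
    by_cases hk : A k
    · exact ((h k).1 hk).2.2.trans (le_max_left _ _)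
    · exact (((h k).2 hk).2.2.trans (min_le_right _ _)).trans (le_max_right _ _)
  rw [← tendsto_add_atTop_iff_nat 1]
  refine squeeze_zero (fun k => (h.pos h0 _).le) hsucc_le ?_
  simpa using (hτ.comp hl_top).max (hτ.comp ((tendsto_add_atTop_nat 1).comp hl_top))

end AdaptiveStepRule

theorem stmt_17_general {n : ℕ} (D : Set (EuclideanSpace ℝ (Fin n)))
    (hDconv : Convex ℝ D) (hDcl : IsClosed D)
    (hDbd : Bornology.IsBounded D)
    (f : EuclideanSpace ℝ (Fin n) → ℝ)
    (f' : EuclideanSpace ℝ (Fin n) → EuclideanSpace ℝ (Fin n))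
    (hf : ∀ x ∈ D, HasGradientAt f (f' x) x)
    (hf' : ContinuousOn f' D)
    (β δ : ℝ) (hβ : β ∈ Set.Ioo (0 : ℝ) 1) (hδ : 0 < δ)
    (τ : ℕ → ℝ) (hτ0 : Tendsto τ atTop (nhds 0))
    (x z : ℕ → EuclideanSpace ℝ (Fin n)) (lam : ℕ → ℝ) (l : ℕ → ℕ)
    (hxD : ∀ k, x k ∈ D) (hzD : ∀ k, z k ∈ D)
    (hlam0 : lam 0 ∈ Set.Ioc (0 : ℝ) (τ 0))
    (hgap : ∀ k, δ ≤ ⟪f' (x k), x k - z k⟫)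
    (hstep : ∀ k, x (k + 1) = x k + lam k • (z k - x k))
    (hlmono : Monotone l)
    (hrule : ∀ k,
      (f (x (k + 1)) ≤ f (x k) + β * lam k * ⟪f' (x k), z k - x k⟫ →
        l (k + 1) = l k ∧ lam (k + 1) ∈ Set.Icc (lam k) (τ (l k))) ∧
      (¬ (f (x (k + 1)) ≤ f (x k) + β * lam k * ⟪f' (x k), z k - x k⟫) →
        l (k + 1) = l k + 1 ∧ lam (k + 1) ∈ Set.Ioc (0 : ℝ) (min (lam k) (τ (l k + 1))))) :
    False := by
  obtain ⟨hβ0, hβ1⟩ := hβ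
  have hrule : AdaptiveStepRule
      (fun k => f (x (k + 1)) ≤ f (x k) + β * lam k * ⟪f' (x k), z k - x k⟫) τ lam l := hrule
  have hlam_pos := hrule.pos hlam0.1
  have hdesc : ∀ k, ⟪f' (x k), z k - x k⟫ ≤ -δ := fun k => by
    rw [← neg_sub, inner_neg_right]; linarith [hgap k]
  have hDcpt : IsCompact D := Metric.isCompact_of_isClosed_isBounded hDcl hDbd
  by_cases hsucc : ∀ᶠ k in atTop, f (x (k + 1)) ≤ f (x k) + β * lam k * ⟪f' (x k), z k - x k⟫
  · have hbdd : BddBelow (Set.range fun k => f (x k)) :=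
      (hDcpt.bddBelow_image fun y hy => (hf y hy).continuousAt.continuousWithinAt).mono
        (Set.range_subset_iff.2 fun k => Set.mem_image_of_mem f (hxD k))
    refine not_bddBelow_range_of_eventually_le_sub_mul (mul_pos hβ0 hδ) hlam_pos ?_ hbdd
    filter_upwards [hsucc] with k hk
    refine ⟨((hrule k).1 hk).2.1, ?_⟩
    nlinarith [mul_le_mul_of_nonneg_left (hdesc k) (mul_nonneg hβ0.le (hlam_pos k).le)]
  · rw [not_eventually] at hsucc
    obtain ⟨η, hη, harmijo⟩ :=
      hDconv.exists_pos_armijo hDbd hf (hDcpt.uniformContinuousOn_of_continuous hf') hβ1 hδ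
    have hsmall := (hrule.tendsto_zero hlam0.1 hlmono hτ0 hsucc).eventually (eventually_le_nhds hη)
    obtain ⟨k, hfail, hk⟩ := (hsucc.and_eventually hsmall).exists
    have := harmijo _ (hxD k) _ (hzD k) (hdesc k) _ ⟨(hlam_pos k).le, hk⟩
    rw [← hstep k] at this
    exact hfail this

/-- Each stage of the combined inexact adaptive-step method (CGMIS) is
finite: fix `δ > 0`, `β ∈ (0,1)`, a positive sequence `{τ_l} → 0` with `τ₀ ∈ (0,1)`,
and `λ₀ ∈ (0, τ₀]`.  There is no infinite sequence `{x^k} ⊂ D` with points `z^k ∈ D`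
such that for every `k`: `⟪f'(x^k), x^k − z^k⟫ ≥ δ`, `d^k = z^k − x^k`,
`x^{k+1} = x^k + λ_k d^k`, and there is a nondecreasing index function `k ↦ l(k)` with
`l(0) = 0` such that if `f(x^{k+1}) ≤ f(x^k) + β λ_k ⟪f'(x^k), d^k⟫` then
`l(k+1) = l(k)` and `λ_{k+1} ∈ [λ_k, τ_{l(k)}]`, and otherwise `l(k+1) = l(k) + 1` and
`λ_{k+1} ∈ (0, min{λ_k, τ_{l(k)+1}}]`. -/
theorem stmt_17 {n : ℕ} (D : Set (EuclideanSpace ℝ (Fin n)))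
    (hDne : D.Nonempty) (hDconv : Convex ℝ D) (hDcl : IsClosed D)
    (hDbd : Bornology.IsBounded D)
    (f : EuclideanSpace ℝ (Fin n) → ℝ)
    (f' : EuclideanSpace ℝ (Fin n) → EuclideanSpace ℝ (Fin n))
    (hf : ∀ x ∈ D, HasGradientAt f (f' x) x)
    (hf' : ContinuousOn f' D)
    (β δ : ℝ) (hβ : β ∈ Set.Ioo (0 : ℝ) 1) (hδ : 0 < δ)
    (τ : ℕ → ℝ) (hτpos : ∀ l, 0 < τ l) (hτ0 : Tendsto τ atTop (nhds 0))
    (hτ01 : τ 0 ∈ Set.Ioo (0 : ℝ) 1)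
    (x z : ℕ → EuclideanSpace ℝ (Fin n)) (lam : ℕ → ℝ) (l : ℕ → ℕ)
    (hxD : ∀ k, x k ∈ D) (hzD : ∀ k, z k ∈ D)
    (hlam0 : lam 0 ∈ Set.Ioc (0 : ℝ) (τ 0))
    (hgap : ∀ k, δ ≤ ⟪f' (x k), x k - z k⟫)
    (hstep : ∀ k, x (k + 1) = x k + lam k • (z k - x k))
    (hlmono : Monotone l) (hl0 : l 0 = 0)
    (hrule : ∀ k,
      (f (x (k + 1)) ≤ f (x k) + β * lam k * ⟪f' (x k), z k - x k⟫ →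
        l (k + 1) = l k ∧ lam (k + 1) ∈ Set.Icc (lam k) (τ (l k))) ∧
      (¬ (f (x (k + 1)) ≤ f (x k) + β * lam k * ⟪f' (x k), z k - x k⟫) →
        l (k + 1) = l k + 1 ∧ lam (k + 1) ∈ Set.Ioc (0 : ℝ) (min (lam k) (τ (l k + 1))))) :
    False :=
  stmt_17_general D hDconv hDcl hDbd f f' hf hf' β δ hβ hδ τ hτ0 x z lam l hxD hzD hlam0 hgap hstep
    hlmono hrule
end

section
/- Let {x^k_s} and {y^k_s} be convergent subsequences of sequences in D with y^{k_s} ∈ Z(x^{k_s}), x^{k_s} → x', y^{k_s} → y', and suppose ⟨f'(x^{k_s}), y^{k_s} − x^{k_s}⟩ → 0. Then x' ∈ D⁰. -/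
open Filter RealInnerProductSpace Topology

theorem inner_sub_nonneg_of_tendsto_inner_gap {E : Type*} [NormedAddCommGroup E]
    [InnerProductSpace ℝ E] {D : Set E} {g x y : ℕ → E} {g₀ x₀ : E}
    (hg : Tendsto g atTop (𝓝 g₀)) (hx : Tendsto x atTop (𝓝 x₀))
    (hmin : ∀ s, ∀ w ∈ D, ⟪g s, y s⟫ ≤ ⟪g s, w⟫)
    (hgap : Tendsto (fun s => ⟪g s, y s - x s⟫) atTop (𝓝 0))
    {u : E} (hu : u ∈ D) : 0 ≤ ⟪g₀, u - x₀⟫ := by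
  have hlim : Tendsto (fun s => ⟪g s, u - x s⟫) atTop (𝓝 ⟪g₀, u - x₀⟫) :=
    hg.inner (tendsto_const_nhds.sub hx)
  refine le_of_tendsto_of_tendsto hgap hlim (Eventually.of_forall fun s => ?_)
  have hyu := hmin s u hu
  simp only [inner_sub_right]
  linarith

theorem stmt_19_general {n : ℕ} (D : Set (EuclideanSpace ℝ (Fin n)))
    (hDcl : IsClosed D)
    (f' : EuclideanSpace ℝ (Fin n) → EuclideanSpace ℝ (Fin n))
    (hf' : ContinuousOn f' D)
    (xk yk : ℕ → EuclideanSpace ℝ (Fin n))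
    (x' : EuclideanSpace ℝ (Fin n))
    (hxkD : ∀ s, xk s ∈ D)
    (hyk : ∀ s, yk s ∈ D ∧ ∀ w ∈ D, ⟪f' (xk s), yk s⟫ ≤ ⟪f' (xk s), w⟫)
    (hxlim : Tendsto xk atTop (nhds x'))
    (hinner : Tendsto (fun s => ⟪f' (xk s), yk s - xk s⟫) atTop (nhds 0)) :
    x' ∈ D ∧ ∀ u ∈ D, 0 ≤ ⟪f' x', u - x'⟫ := by
  have hx'D : x' ∈ D := hDcl.mem_of_tendsto hxlim (Eventually.of_forall hxkD)
  have hgrad : Tendsto (fun s => f' (xk s)) atTop (𝓝 (f' x')) :=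
    (hf' x' hx'D).tendsto.comp (tendsto_nhdsWithin_iff.2 ⟨hxlim, Eventually.of_forall hxkD⟩)
  exact ⟨hx'D, fun u hu =>
    inner_sub_nonneg_of_tendsto_inner_gap hgrad hxlim (fun s => (hyk s).2) hinner hu⟩

/-- Let `{x^{k_s}}` and `{y^{k_s}}` be convergent subsequences of
sequences in `D` with `y^{k_s} ∈ Z(x^{k_s})`, `x^{k_s} → x'`, `y^{k_s} → y'`, and
suppose `⟪f'(x^{k_s}), y^{k_s} − x^{k_s}⟫ → 0`.  Then `x' ∈ D⁰`. -/
theorem stmt_19 {n : ℕ} (D : Set (EuclideanSpace ℝ (Fin n)))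
    (hDne : D.Nonempty) (hDconv : Convex ℝ D) (hDcl : IsClosed D)
    (hDbd : Bornology.IsBounded D)
    (f : EuclideanSpace ℝ (Fin n) → ℝ)
    (f' : EuclideanSpace ℝ (Fin n) → EuclideanSpace ℝ (Fin n))
    (hf : ∀ x ∈ D, HasGradientAt f (f' x) x)
    (hf' : ContinuousOn f' D)
    (xk yk : ℕ → EuclideanSpace ℝ (Fin n))
    (x' y' : EuclideanSpace ℝ (Fin n))
    (hxkD : ∀ s, xk s ∈ D)
    (hyk : ∀ s, yk s ∈ D ∧ ∀ w ∈ D, ⟪f' (xk s), yk s⟫ ≤ ⟪f' (xk s), w⟫)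
    (hxlim : Tendsto xk atTop (nhds x'))
    (hylim : Tendsto yk atTop (nhds y'))
    (hinner : Tendsto (fun s => ⟪f' (xk s), yk s - xk s⟫) atTop (nhds 0)) :
    x' ∈ D ∧ ∀ u ∈ D, 0 ≤ ⟪f' x', u - x'⟫ :=
  stmt_19_general D hDcl f' hf' xk yk x' hxkD hyk hxlim hinner
end
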